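/- arXiv:2102.10630 — 2 statements merged into one kernel-verified Lean document; each statement's English description precedes it below -/
import Mathlib

section
/- Let X be a nonnegative absolutely continuous random variable with cumulative distribution function F and support (0,l), and let X_θ, θ > 0, satisfy the proportional reversed hazard model F_{X_θ}(x) = [F(x)]^θ, with ℰ_θ(α) := (1/Γ(α)) E[ X_θ (−ln F_{X_θ}(X_θ))^{α−1} ] finite for the relevant orders. Then for all α > 0 and every integer n ≥ 2: CE_{α+n}(X_θ) = (−1)^n CE_α(X_θ) + ℰ_θ(α+n) − ℰ_θ(α+n+1) + (−1)^{n−1} [ℰ_θ(α) − ℰ_θ(α+1)]. -/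
open MeasureTheory Set
open scoped ProbabilityTheory

/-- Fractional generalized cumulative entropy of a distribution function `G`
over a set `S`. -/
noncomputable def fgceOn (G : ℝ → ℝ) (S : Set ℝ) (α : ℝ) : ℝ :=
  (1 / Real.Gamma (α + 1)) * ∫ x in S, G x * (-Real.log (G x)) ^ α

/-- The quantity `ℰ_θ(α) = (1/Γ(α)) E[ X_θ (−ln F_{X_θ}(X_θ))^{α−1} ]` for the
proportional reversed hazard model with baseline CDF `F` and parameter `θ`. -/
noncomputable def EthetaPRH {Ω : Type*} [MeasureSpace Ω]
    (Xθ : Ω → ℝ) (F : ℝ → ℝ) (θ α : ℝ) : ℝ :=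
  (1 / Real.Gamma α) * ∫ ω, Xθ ω * (-Real.log ((F (Xθ ω)) ^ θ)) ^ (α - 1) ∂ℙ

/-!
The recurrence is a formal consequence of the single-order identity
`CE_β(X_θ) = ℰ_θ(β) - ℰ_θ(β + 1)`, because `(-1)^n + (-1)^(n-1) = 0`.

For that identity write `G = F^θ`. Since `G` is a continuous distribution function, `G(X_θ)`
is uniform on `(0, 1]` and `{X_θ > x} = {G(X_θ) > G(x)}` almost surely. For `0 < G(x) ≤ 1`,
`G(x) (-ln G(x))^β = ∫_{G(x)}^1 (β (-ln u)^(β-1) - (-ln u)^β) du`, and by uniformity the right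
side is `E[β (-ln G(X_θ))^(β-1) - (-ln G(X_θ))^β; X_θ > x]`. Integrating over `x > 0` with the
layer-cake formula gives
`β E[X_θ (-ln G(X_θ))^(β-1)] - E[X_θ (-ln G(X_θ))^β] = Γ(β+1) (ℰ_θ(β) - ℰ_θ(β+1))`.
-/

open Filter Topology ProbabilityTheory Real

section Density

variable {f : ℝ → ℝ}

theorem continuous_integral_Iio (hf : Integrable f) :
    Continuous fun x => ∫ t in Iio x, f t :=
  continuous_iff_continuousAt.2 fun x =>
    (hf.integrableOn.continuousOn_Iic_primitive_Iio (a₀ := x + 1)).continuousAt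
      (Iic_mem_nhds (by linarith))

theorem integral_Iio_eq_integral_of_forall_ge_eq_zero {x : ℝ} (hf : Integrable f)
    (h : ∀ t, x ≤ t → f t = 0) : ∫ t in Iio x, f t = ∫ t, f t := by
  rw [← intervalIntegral.integral_Iio_add_Ici hf.integrableOn hf.integrableOn,
    setIntegral_congr_fun measurableSet_Ici (g := fun _ => 0) h, integral_zero, add_zero]

theorem integral_Iio_pos {x : ℝ} (hf : Integrable f) (hnn : ∀ t, 0 ≤ f t)
    (hpos : ∀ t ∈ Ioo 0 x, 0 < f t) (hx : 0 < x) : 0 < ∫ t in Iio x, f t :=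
  calc 0 < ∫ t in (0)..x, f t :=
        intervalIntegral.intervalIntegral_pos_of_pos_on hf.intervalIntegrable hpos hx
    _ = ∫ t in Ioo 0 x, f t := by
        rw [intervalIntegral.integral_of_le hx.le, integral_Ioc_eq_integral_Ioo]
    _ ≤ ∫ t in Iio x, f t :=
        setIntegral_mono_set hf.integrableOn (.of_forall hnn) Ioo_subset_Iio_self.eventuallyLE

theorem integral_Iio_eq_one_of_le {l : EReal} (hf_prob : ∫ t, f t = 1)
    (hf_supp : ∀ t : ℝ, ¬ (0 < t ∧ (t : EReal) < l) → f t = 0) {x : ℝ} (hlx : l ≤ x) :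
    ∫ t in Iio x, f t = 1 := by
  rw [integral_Iio_eq_integral_of_forall_ge_eq_zero (.of_integral_ne_zero (by simp [hf_prob]))
    fun t ht => hf_supp t fun h => (hlx.trans (EReal.coe_le_coe_iff.2 ht)).not_gt h.2, hf_prob]

theorem integral_Iio_pos_of_pos {l : EReal} (hf_prob : ∫ t, f t = 1) (hnn : ∀ t, 0 ≤ f t)
    (hpos : ∀ t : ℝ, 0 < t → (t : EReal) < l → 0 < f t)
    (hf_supp : ∀ t : ℝ, ¬ (0 < t ∧ (t : EReal) < l) → f t = 0) {x : ℝ} (hx : 0 < x) :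
    0 < ∫ t in Iio x, f t := by
  rcases lt_or_ge (x : EReal) l with hxl | hlx
  · exact integral_Iio_pos (.of_integral_ne_zero (by simp [hf_prob])) hnn
      (fun t ht => hpos t ht.1 ((EReal.coe_lt_coe_iff.2 ht.2).trans hxl)) hx
  · rw [integral_Iio_eq_one_of_le hf_prob hf_supp hlx]
    exact one_pos

end Density

theorem exists_eq_and_setOf_le_eq_Iic {F : ℝ → ℝ} (hmono : Monotone F) (hcont : Continuous F)
    (htop : Tendsto F atTop (𝓝 1)) {a : ℝ} (ha : a < 1) (hne : ∃ y, F y ≤ a) :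
    ∃ x₀, F x₀ = a ∧ {y | F y ≤ a} = Iic x₀ := by
  obtain ⟨y, hy⟩ := hne
  obtain ⟨b, hb⟩ := (htop.eventually (lt_mem_nhds ha)).exists_forall_of_atTop
  have hbdd : BddAbove {y | F y ≤ a} :=
    ⟨b, fun z hz => le_of_lt (lt_of_not_ge fun hbz => (hb z hbz).not_ge hz)⟩
  have hclosed : IsClosed {y | F y ≤ a} := isClosed_le hcont continuous_const
  set x₀ := sSup {y | F y ≤ a}
  have hx₀ : F x₀ ≤ a := hclosed.csSup_mem ⟨y, hy⟩ hbdd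
  have hyb : y ≤ b := le_of_lt (lt_of_not_ge fun hby => (hb y hby).not_ge hy)
  obtain ⟨z, -, hz⟩ := intermediate_value_Icc hyb hcont.continuousOn ⟨hy, (hb b le_rfl).le⟩
  refine ⟨x₀, le_antisymm hx₀ (hz ▸ hmono (le_csSup hbdd hz.le)), ?_⟩
  ext w
  exact ⟨fun hw => le_csSup hbdd hw, fun hw => (hmono hw).trans hx₀⟩

theorem map_cdf_eq_volume_restrict (ν : Measure ℝ) [IsProbabilityMeasure ν]
    (hcont : Continuous (cdf ν)) : ν.map (cdf ν) = volume.restrict (Ioc 0 1) := by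
  have : IsProbabilityMeasure (volume.restrict (Ioc (0 : ℝ) 1)) := ⟨by simp⟩
  have : IsProbabilityMeasure (ν.map (cdf ν)) :=
    Measure.isProbabilityMeasure_map (monotone_cdf ν).measurable.aemeasurable
  refine Measure.ext_of_Iic _ _ fun a => ?_
  rw [Measure.map_apply (monotone_cdf ν).measurable measurableSet_Iic,
    Measure.restrict_apply measurableSet_Iic, inter_comm, Ioc_inter_Iic, Real.volume_Ioc,
    sub_zero]
  by_cases hne : ∃ y, cdf ν y ≤ a
  · obtain ⟨y, hy⟩ := hne
    rcases lt_or_ge a 1 with ha1 | ha1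
    · obtain ⟨x₀, hx₀, hset⟩ := exists_eq_and_setOf_le_eq_Iic (monotone_cdf ν) hcont
        (tendsto_cdf_atTop ν) ha1 ⟨y, hy⟩
      rw [show cdf ν ⁻¹' Iic a = Iic x₀ from hset, ← ofReal_cdf, hx₀, min_eq_right ha1.le]
    · rw [show cdf ν ⁻¹' Iic a = univ from
          eq_univ_of_forall fun x => (cdf_le_one ν x).trans ha1,
        measure_univ, min_eq_left ha1, ENNReal.ofReal_one]
  · push Not at hne
    have ha : a ≤ 0 := not_lt.1 fun ha =>
      (((tendsto_cdf_atBot ν).eventually (gt_mem_nhds ha)).exists).elim fun y hy =>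
        (hne y).not_gt hy
    rw [show cdf ν ⁻¹' Iic a = ∅ from eq_empty_of_forall_notMem fun x hx => (hne x).not_ge hx,
      measure_empty, ENNReal.ofReal_of_nonpos ((min_le_right _ _).trans ha)]

section NegLogRpow

variable {β u₀ : ℝ}

theorem hasDerivAt_neg_log_rpow {u : ℝ} (β : ℝ) (hu : 0 < u) (hu1 : u < 1) :
    HasDerivAt (fun u => (-log u) ^ β) (-(β * (-log u) ^ (β - 1) / u)) u := by
  have hlog : 0 < -log u := neg_pos.2 (log_neg hu hu1)
  refine ((hasDerivAt_log hu.ne').neg.rpow_const (p := β) (Or.inl hlog.ne')).congr_deriv ?_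
  simp only [Pi.neg_apply]
  field_simp

theorem continuousOn_neg_log_rpow (hβ : 0 ≤ β) (hu₀ : 0 < u₀) :
    ContinuousOn (fun u => (-log u) ^ β) (Icc u₀ 1) :=
  (continuousOn_log.mono fun _ hu => (hu₀.trans_le hu.1).ne').neg.rpow_const
    fun _ _ => Or.inr hβ

theorem integrableOn_neg_log_rpow_sub_one (hβ : 0 < β) (hu₀ : 0 < u₀) :
    IntegrableOn (fun u => (-log u) ^ (β - 1)) (Ioc u₀ 1) := by
  -- `(-log u) ^ (β - 1) / u` is the nonnegative derivative of `-(-log u) ^ β / β`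
  have hderiv : IntegrableOn (fun u => (-log u) ^ (β - 1) / u) (Ioc u₀ 1) := by
    refine intervalIntegral.integrableOn_deriv_of_nonneg
      ((continuousOn_neg_log_rpow hβ.le hu₀).neg.div_const β) (fun u hu => ?_) fun u hu => ?_
    · refine ((hasDerivAt_neg_log_rpow β (hu₀.trans hu.1) hu.2).neg.div_const β).congr_deriv ?_
      field_simp
    · exact div_nonneg (rpow_nonneg (neg_nonneg.2 (log_nonpos (hu₀.trans hu.1).le hu.2.le)) _)
        (hu₀.trans hu.1).le
  refine (hderiv.continuousOn_mul_of_subset continuousOn_id isCompact_Icc measurableSet_Ioc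
    Ioc_subset_Icc_self).congr_fun (fun u hu => ?_) measurableSet_Ioc
  simp only [id]
  field_simp [(hu₀.trans hu.1).ne']

theorem integral_Ioc_neg_log_rpow (hβ : 0 < β) (hu₀ : 0 < u₀) (hu₀1 : u₀ ≤ 1) :
    β * (∫ u in Ioc u₀ 1, (-log u) ^ (β - 1)) - ∫ u in Ioc u₀ 1, (-log u) ^ β
      = u₀ * (-log u₀) ^ β := by
  have hint : IntegrableOn (fun u => (-log u) ^ β) (Ioc u₀ 1) :=
    (continuousOn_neg_log_rpow hβ.le hu₀).integrableOn_compact isCompact_Icc |>.mono_set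
      Ioc_subset_Icc_self
  have hint' := (integrableOn_neg_log_rpow_sub_one hβ hu₀).const_mul β
  have hftc := intervalIntegral.integral_eq_sub_of_hasDerivAt_of_le
    (f := fun u => u * (-log u) ^ β) (f' := fun u => (-log u) ^ β - β * (-log u) ^ (β - 1))
    hu₀1 (continuousOn_id.mul (continuousOn_neg_log_rpow hβ.le hu₀))
    (fun u hu => ?_) ((intervalIntegrable_iff_integrableOn_Ioc_of_le hu₀1).2 (hint.sub hint'))
  · rw [intervalIntegral.integral_of_le hu₀1, integral_sub hint hint', integral_const_mul]
      at hftc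
    simp only [log_one, neg_zero, zero_rpow hβ.ne', mul_zero, zero_sub] at hftc
    linear_combination -hftc
  · refine ((hasDerivAt_id' u).mul
      (hasDerivAt_neg_log_rpow β (hu₀.trans hu.1) hu.2)).congr_deriv ?_
    field_simp [(hu₀.trans hu.1).ne']
    ring

namespace MeasureTheory.Integrable

variable {α : Type*} [MeasurableSpace α] {μ : Measure α}

theorem integrableOn_measureReal_lt {f : α → ℝ} (hf : Integrable f μ)
    (hnn : 0 ≤ᵐ[μ] f) : IntegrableOn (fun t => μ.real {a | t < f a}) (Ioi 0) := by
  have hanti : Antitone fun t => μ {a | t < f a} := fun _ _ hst =>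
    measure_mono fun _ h => hst.trans_lt h
  refine integrable_toReal_of_lintegral_ne_top hanti.measurable.aemeasurable ?_
  rw [← lintegral_eq_lintegral_meas_lt μ hnn hf.aemeasurable]
  exact hf.lintegral_lt_top.ne

theorem integral_mul_eq_integral_setIntegral_lt {X c : α → ℝ}
    (hX : Measurable X) (hXnn : ∀ a, 0 ≤ X a) (hc : Measurable c) (hcnn : ∀ a, 0 ≤ c a)
    (hXc : Integrable (fun a => X a * c a) μ) :
    IntegrableOn (fun t => ∫ a in {a | t < X a}, c a ∂μ) (Ioi 0) ∧
      ∫ a, X a * c a ∂μ = ∫ t in Ioi 0, ∫ a in {a | t < X a}, c a ∂μ := by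
  -- the layer-cake formula for `X` under the measure with density `c`
  set ν := μ.withDensity fun a => ENNReal.ofReal (c a)
  have hν : ∀ t, ν.real {a | t < X a} = ∫ a in {a | t < X a}, c a ∂μ := fun t => by
    rw [measureReal_def, withDensity_apply _ (measurableSet_lt measurable_const hX),
      integral_eq_lintegral_of_nonneg_ae (.of_forall hcnn) hc.aestronglyMeasurable]
  have hXν : Integrable X ν := by
    refine (integrable_withDensity_iff hc.ennreal_ofReal
      (.of_forall fun _ => ENNReal.ofReal_lt_top)).2 ?_
    simpa only [ENNReal.toReal_ofReal (hcnn _)] using hXc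
  have hXν_eq : ∫ a, X a ∂ν = ∫ a, X a * c a ∂μ := by
    rw [integral_withDensity_eq_integral_toReal_smul hc.ennreal_ofReal
      (.of_forall fun _ => ENNReal.ofReal_lt_top)]
    simp only [ENNReal.toReal_ofReal (hcnn _), smul_eq_mul, mul_comm]
  refine ⟨(hXν.integrableOn_measureReal_lt (.of_forall hXnn)).congr_fun (fun t _ => hν t)
    measurableSet_Ioi, ?_⟩
  rw [← hXν_eq, hXν.integral_eq_integral_meas_lt (.of_forall hXnn)]
  simp only [hν]

end MeasureTheory.Integrable

section CDF

variable {Ω : Type*} [MeasurableSpace Ω] {μ : Measure Ω} [IsProbabilityMeasure μ]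
  {X : Ω → ℝ} {G : ℝ → ℝ}

theorem eq_cdf_map (hX : Measurable X) (hcdf : ∀ x, μ.real {ω | X ω ≤ x} = G x) :
    G = cdf (μ.map X) := by
  have : IsProbabilityMeasure (μ.map X) := Measure.isProbabilityMeasure_map hX.aemeasurable
  ext x
  rw [cdf_eq_real, map_measureReal_apply hX measurableSet_Iic, ← hcdf]
  rfl

theorem map_comp_eq_volume_restrict (hX : Measurable X) (hG : Continuous G)
    (hcdf : ∀ x, μ.real {ω | X ω ≤ x} = G x) :
    μ.map (fun ω => G (X ω)) = volume.restrict (Ioc 0 1) := by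
  have : IsProbabilityMeasure (μ.map X) := Measure.isProbabilityMeasure_map hX.aemeasurable
  rw [show (fun ω => G (X ω)) = G ∘ X from rfl, ← Measure.map_map hG.measurable hX,
    eq_cdf_map hX hcdf]
  exact map_cdf_eq_volume_restrict _ (eq_cdf_map hX hcdf ▸ hG)

theorem setIntegral_lt_comp_eq_setIntegral_Ioc (hX : Measurable X) (hG : Continuous G)
    (hcdf : ∀ x, μ.real {ω | X ω ≤ x} = G x) {φ : ℝ → ℝ} (hφ : Measurable φ)
    (t : ℝ) :
    ∫ ω in {ω | t < X ω}, φ (G (X ω)) ∂μ = ∫ u in Ioc (G t) 1, φ u := by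
  have hmap := map_comp_eq_volume_restrict hX hG hcdf
  have hGX : Measurable fun ω => G (X ω) := hG.measurable.comp hX
  have hGt : 0 ≤ G t := eq_cdf_map hX hcdf ▸ cdf_nonneg _ t
  -- `{X ≤ t} ⊆ {G X ≤ G t}`, and both events have probability `G t`
  have hle : {ω | X ω ≤ t} =ᵐ[μ] (fun ω => G (X ω)) ⁻¹' Iic (G t) := by
    refine ae_eq_of_subset_of_measure_ge
      (fun ω hω => (eq_cdf_map hX hcdf ▸ monotone_cdf _ : Monotone G) hω) ?_
      (measurableSet_le hX measurable_const).nullMeasurableSet (measure_ne_top _ _)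
    rw [← Measure.map_apply hGX measurableSet_Iic, hmap,
      Measure.restrict_apply measurableSet_Iic, inter_comm, Ioc_inter_Iic, Real.volume_Ioc,
      sub_zero, ← hcdf t]
    exact (ENNReal.ofReal_le_ofReal (min_le_right _ _)).trans_eq
      (ofReal_measureReal (measure_ne_top _ _))
  have hlt : {ω | t < X ω} =ᵐ[μ] (fun ω => G (X ω)) ⁻¹' Ioi (G t) := by
    rw [show {ω | t < X ω} = {ω | X ω ≤ t}ᶜ by ext; simp, ← compl_Iic, preimage_compl]
    exact hle.compl
  rw [setIntegral_congr_set hlt,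
    ← setIntegral_map measurableSet_Ioi hφ.aestronglyMeasurable hGX.aemeasurable, hmap,
    Measure.restrict_restrict measurableSet_Ioi,
    show Ioi (G t) ∩ Ioc 0 1 = Ioc (G t) 1 from
      ext fun u => ⟨fun h => ⟨h.1, h.2.2⟩, fun h => ⟨h.1, hGt.trans_lt h.1, h.2⟩⟩]

theorem integral_mul_comp_cdf (hX : Measurable X) (hXnn : ∀ ω, 0 ≤ X ω) (hG : Continuous G)
    (hcdf : ∀ x, μ.real {ω | X ω ≤ x} = G x) {φ : ℝ → ℝ} (hφ : Measurable φ)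
    (hφnn : ∀ u ∈ Icc 0 1, 0 ≤ φ u)
    (hint : Integrable (fun ω => X ω * φ (G (X ω))) μ) :
    IntegrableOn (fun t => ∫ u in Ioc (G t) 1, φ u) (Ioi 0) ∧
      ∫ ω, X ω * φ (G (X ω)) ∂μ = ∫ t in Ioi 0, ∫ u in Ioc (G t) 1, φ u := by
  have hG01 : ∀ x, G x ∈ Icc 0 1 := fun x =>
    eq_cdf_map hX hcdf ▸ ⟨cdf_nonneg _ x, cdf_le_one _ x⟩
  simp only [← setIntegral_lt_comp_eq_setIntegral_Ioc hX hG hcdf hφ]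
  exact hint.integral_mul_eq_integral_setIntegral_lt hX hXnn (hφ.comp (hG.measurable.comp hX))
    fun ω => hφnn _ (hG01 _)

theorem integral_Ioi_mul_neg_log_cdf_rpow (hX : Measurable X) (hXnn : ∀ ω, 0 ≤ X ω)
    (hG : Continuous G) (hcdf : ∀ x, μ.real {ω | X ω ≤ x} = G x)
    (hGpos : ∀ x, 0 < x → 0 < G x) {β : ℝ} (hβ : 0 < β)
    (hint₁ : Integrable (fun ω => X ω * (-log (G (X ω))) ^ (β - 1)) μ)
    (hint₂ : Integrable (fun ω => X ω * (-log (G (X ω))) ^ β) μ) :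
    ∫ x in Ioi 0, G x * (-log (G x)) ^ β
      = β * (∫ ω, X ω * (-log (G (X ω))) ^ (β - 1) ∂μ)
        - ∫ ω, X ω * (-log (G (X ω))) ^ β ∂μ := by
  have hG1 : ∀ x, G x ≤ 1 := fun x => eq_cdf_map hX hcdf ▸ cdf_le_one _ x
  have hneglog : ∀ γ : ℝ, ∀ u ∈ Icc (0 : ℝ) 1, 0 ≤ (-log u) ^ γ := fun γ u hu =>
    rpow_nonneg (neg_nonneg.2 (log_nonpos hu.1 hu.2)) γ
  have hmeas : ∀ γ : ℝ, Measurable fun u : ℝ => (-log u) ^ γ := fun γ => by fun_prop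
  obtain ⟨hI₁, hE₁⟩ := integral_mul_comp_cdf hX hXnn hG hcdf (hmeas _) (hneglog _) hint₁
  obtain ⟨hI₂, hE₂⟩ := integral_mul_comp_cdf hX hXnn hG hcdf (hmeas _) (hneglog _) hint₂
  rw [hE₁, hE₂, ← integral_const_mul, ← integral_sub (hI₁.const_mul β) hI₂]
  exact setIntegral_congr_fun measurableSet_Ioi fun x hx =>
    (integral_Ioc_neg_log_rpow hβ (hGpos x hx) (hG1 x)).symm

end CDF

theorem fgceOn_eq_of_eq_one_on_sdiff {G : ℝ → ℝ} {S T : Set ℝ} (hT : MeasurableSet T)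
    (hST : S ⊆ T) (hG : ∀ x ∈ T \ S, G x = 1) {β : ℝ} (hβ : β ≠ 0) :
    fgceOn G S β = fgceOn G T β := by
  rw [fgceOn, fgceOn, ← setIntegral_eq_of_subset_of_forall_sdiff_eq_zero hT hST fun x hx => by
    simp [hG x hx, zero_rpow hβ]]

theorem fgceOn_Ioi_prh_eq_sub {Ω : Type*} [MeasureSpace Ω]
    [IsProbabilityMeasure (ℙ : Measure Ω)] {F : ℝ → ℝ} {θ : ℝ} {Xθ : Ω → ℝ}
    (hXθ : Measurable Xθ) (hXθnn : ∀ ω, 0 ≤ Xθ ω) (hG : Continuous fun x => F x ^ θ)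
    (hcdf : ∀ x, (ℙ : Measure Ω).real {ω | Xθ ω ≤ x} = F x ^ θ)
    (hGpos : ∀ x, 0 < x → 0 < F x ^ θ) {β : ℝ} (hβ : 0 < β)
    (hint₁ : Integrable (fun ω => Xθ ω * (-log (F (Xθ ω) ^ θ)) ^ (β - 1)))
    (hint₂ : Integrable (fun ω => Xθ ω * (-log (F (Xθ ω) ^ θ)) ^ β)) :
    fgceOn (fun x => F x ^ θ) (Ioi 0) β
      = EthetaPRH Xθ F θ β - EthetaPRH Xθ F θ (β + 1) := by
  rw [fgceOn, EthetaPRH, EthetaPRH, add_sub_cancel_right,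
    integral_Ioi_mul_neg_log_cdf_rpow hXθ hXθnn hG hcdf hGpos hβ hint₁ hint₂,
    Gamma_add_one hβ.ne']
  have hΓ : Gamma β ≠ 0 := (Gamma_pos_of_pos hβ).ne'
  field_simp

theorem fgce_prhm_recurrence_n_general
    {Ω : Type*} [MeasureSpace Ω] [IsProbabilityMeasure (ℙ : Measure Ω)]
    (F f : ℝ → ℝ) (l : EReal)
    (α θ : ℝ) (hα : 0 < α) (hθ : 0 < θ)
    (n : ℕ) (hn : 2 ≤ n)
    -- the baseline distribution is absolutely continuous with density `f`
    -- supported on `S = {x | 0 < x < l}`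
    (hf_nonneg : ∀ x, 0 ≤ f x)
    (hf_pos : ∀ x : ℝ, 0 < x → (x : EReal) < l → 0 < f x)
    (hf_supp : ∀ x : ℝ, ¬ (0 < x ∧ (x : EReal) < l) → f x = 0)
    (hf_prob : ∫ x, f x = 1)
    (hF : ∀ x, F x = ∫ t in Set.Iio x, f t)
    -- the random variable `X_θ` with CDF `F^θ`
    (Xθ : Ω → ℝ) (hXθ : Measurable Xθ) (hXθnn : ∀ ω, 0 ≤ Xθ ω)
    (hcdf : ∀ x : ℝ, (ℙ {ω | Xθ ω ≤ x}).toReal = (F x) ^ θ)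
    -- `ℰ_θ` is finite for the relevant orders
    (hEfin : ∀ k : ℕ, k ≤ n + 1 → Integrable
      (fun ω => Xθ ω * (-Real.log ((F (Xθ ω)) ^ θ)) ^ (α + k - 1)) ℙ) :
    fgceOn (fun x => (F x) ^ θ) {x : ℝ | 0 < x ∧ (x : EReal) < l} (α + n)
      = (-1 : ℝ) ^ n * fgceOn (fun x => (F x) ^ θ) {x : ℝ | 0 < x ∧ (x : EReal) < l} α
        + EthetaPRH Xθ F θ (α + n) - EthetaPRH Xθ F θ (α + n + 1)
        + (-1 : ℝ) ^ (n - 1) * (EthetaPRH Xθ F θ α - EthetaPRH Xθ F θ (α + 1)) := by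
  have hFc : Continuous F :=
    funext hF ▸ continuous_integral_Iio (.of_integral_ne_zero (by simp [hf_prob]))
  have hG_eq_one : ∀ x ∈ Ioi 0 \ {x : ℝ | 0 < x ∧ (x : EReal) < l}, F x ^ θ = 1 :=
    fun x hx => by
      rw [hF, integral_Iio_eq_one_of_le hf_prob hf_supp (not_lt.1 fun h => hx.2 ⟨hx.1, h⟩),
        one_rpow]
  have hS := fun β (hβ : 0 < β) =>
    fgceOn_eq_of_eq_one_on_sdiff measurableSet_Ioi (fun x hx => hx.1) hG_eq_one hβ.ne'
  have hprh := fun β (hβ : 0 < β) => fgceOn_Ioi_prh_eq_sub hXθ hXθnn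
    (hFc.rpow_const fun _ => Or.inr hθ.le) hcdf
    (fun x hx => rpow_pos_of_pos
      (hF x ▸ integral_Iio_pos_of_pos hf_prob hf_nonneg hf_pos hf_supp hx) θ) hβ
  rw [hS α hα, hS (α + n) (by positivity),
    hprh α hα (by simpa using hEfin 0 (by omega)) (by simpa using hEfin 1 (by omega)),
    hprh (α + n) (by positivity) (hEfin n (by omega))
      (by convert hEfin (n + 1) le_rfl using 4; push_cast; ring)]
  obtain ⟨m, rfl⟩ : ∃ m, n = m + 1 := ⟨n - 1, by omega⟩
  rw [Nat.add_sub_cancel, pow_succ]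
  ring

/-- under the proportional reversed hazard model `F_{X_θ} = F^θ`, where the
baseline CDF `F` is absolutely continuous (with density `f`) with support `(0,l)`, and
assuming that `ℰ_θ` is finite at the relevant orders, for all `α > 0` and all integers
`n ≥ 2`:
`CE_{α+n}(X_θ) = (−1)^n CE_α(X_θ) + ℰ_θ(α+n) − ℰ_θ(α+n+1)
   + (−1)^{n−1} (ℰ_θ(α) − ℰ_θ(α+1))`. -/
theorem fgce_prhm_recurrence_n
    {Ω : Type*} [MeasureSpace Ω] [IsProbabilityMeasure (ℙ : Measure Ω)]
    (F f : ℝ → ℝ) (l : EReal)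
    (hl : (∃ lr : ℝ, 0 < lr ∧ l = (lr : EReal)) ∨ l = ⊤)
    (α θ : ℝ) (hα : 0 < α) (hθ : 0 < θ)
    (n : ℕ) (hn : 2 ≤ n)
    -- the baseline distribution is absolutely continuous with density `f`
    -- supported on `S = {x | 0 < x < l}`
    (hf_meas : Measurable f) (hf_nonneg : ∀ x, 0 ≤ f x)
    (hf_pos : ∀ x : ℝ, 0 < x → (x : EReal) < l → 0 < f x)
    (hf_supp : ∀ x : ℝ, ¬ (0 < x ∧ (x : EReal) < l) → f x = 0)
    (hf_prob : ∫ x, f x = 1)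
    (hF : ∀ x, F x = ∫ t in Set.Iio x, f t)
    -- the random variable `X_θ` with CDF `F^θ`
    (Xθ : Ω → ℝ) (hXθ : Measurable Xθ) (hXθnn : ∀ ω, 0 ≤ Xθ ω)
    (hcdf : ∀ x : ℝ, (ℙ {ω | Xθ ω ≤ x}).toReal = (F x) ^ θ)
    -- `ℰ_θ` is finite for the relevant orders
    (hEfin : ∀ k : ℕ, k ≤ n + 1 → Integrable
      (fun ω => Xθ ω * (-Real.log ((F (Xθ ω)) ^ θ)) ^ (α + k - 1)) ℙ) :
    fgceOn (fun x => (F x) ^ θ) {x : ℝ | 0 < x ∧ (x : EReal) < l} (α + n)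
      = (-1 : ℝ) ^ n * fgceOn (fun x => (F x) ^ θ) {x : ℝ | 0 < x ∧ (x : EReal) < l} α
        + EthetaPRH Xθ F θ (α + n) - EthetaPRH Xθ F θ (α + n + 1)
        + (-1 : ℝ) ^ (n - 1) * (EthetaPRH Xθ F θ α - EthetaPRH Xθ F θ (α + 1)) :=
  fgce_prhm_recurrence_n_general F f l α θ hα hθ n hn hf_nonneg hf_pos hf_supp hf_prob hF Xθ hXθ
    hXθnn hcdf hEfin
end NegLogRpow
end

section
/- Let X be a random variable with support (0,l), cumulative distribution function F, and finite CE_α(X; t). Then for every 0 < α ≤ 1 and every t ∈ (0,l), CE_α(X; t) ≤ (t/Γ(α+1)) (α/e)^α. -/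
open MeasureTheory Set
open scoped ProbabilityTheory

/-! Monotonicity of `F` puts `u = F x / F t` in `[0, 1]`, and with `v = -log u ≥ 0` the integrand
is `v ^ α * exp (-v) ≤ (α / e) ^ α`; integrating this constant bound over `(0, t)` gives the claim. -/

namespace Real

/-- The maximum of `v ^ α * exp (-v)` over `v ≥ 0` is attained at `v = α`. -/
lemma rpow_mul_exp_neg_le {α v : ℝ} (hα : 0 < α) (hv : 0 ≤ v) :
    v ^ α * exp (-v) ≤ (α / exp 1) ^ α := by
  -- `x ≤ exp (x - 1)` at `x = v / α`, raised to the power `α`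
  have key : (v / α) ^ α ≤ exp (v - α) :=
    calc (v / α) ^ α ≤ exp (v / α - 1) ^ α :=
          rpow_le_rpow (by positivity) (by linarith [add_one_le_exp (v / α - 1)]) hα.le
      _ = exp (v - α) := by rw [← exp_mul]; congr 1; field_simp
  calc v ^ α * exp (-v) = α ^ α * (v / α) ^ α * exp (-v) := by
        rw [div_rpow hv hα.le, mul_div_cancel₀ _ (rpow_pos_of_pos hα α).ne']
    _ ≤ α ^ α * exp (v - α) * exp (-v) := by gcongr
    _ = (α / exp 1) ^ α := by
        rw [div_rpow hα.le (exp_pos 1).le, ← exp_mul, one_mul, mul_assoc, ← exp_add,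
          div_eq_mul_inv, ← exp_neg]
        ring_nf

lemma mul_neg_log_rpow_mem_Icc {α u : ℝ} (hα : 0 < α) (hu : u ∈ Icc 0 1) :
    u * (-log u) ^ α ∈ Icc 0 ((α / exp 1) ^ α) := by
  obtain ⟨hu0, hu1⟩ := hu
  have hlog : 0 ≤ -log u := neg_nonneg.mpr (log_nonpos hu0 hu1)
  refine ⟨by positivity, ?_⟩
  rcases hu0.eq_or_lt with rfl | hpos
  · rw [zero_mul]; positivity
  · calc u * (-log u) ^ α = (-log u) ^ α * exp (-(-log u)) := by
          rw [neg_neg, exp_log hpos, mul_comm]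
      _ ≤ (α / exp 1) ^ α := rpow_mul_exp_neg_le hα hlog

end Real

lemma div_mem_Icc_of_monotone {β : Type*} [Preorder β] {F : β → ℝ} (hF : Monotone F)
    (hF0 : ∀ x, 0 ≤ F x) {x t : β} (hxt : x ≤ t) : F x / F t ∈ Icc 0 1 :=
  ⟨div_nonneg (hF0 x) (hF0 t), div_le_one_of_le₀ (hF hxt) (hF0 t)⟩

lemma monotone_measureReal_le {Ω : Type*} [MeasurableSpace Ω] (μ : Measure Ω)
    [IsFiniteMeasure μ] (X : Ω → ℝ) : Monotone fun x => μ.real {ω | X ω ≤ x} :=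
  fun _ _ hxy => measureReal_mono fun _ hω => le_trans hω hxy

theorem dfgce_upper_bound_general
    {Ω : Type*} [MeasureSpace Ω] [IsProbabilityMeasure (ℙ : Measure Ω)]
    (X : Ω → ℝ)
    (l : ℝ)
    (F : ℝ → ℝ) (hF : ∀ x, F x = (ℙ {ω | X ω ≤ x}).toReal)
    (α : ℝ) (hα : 0 < α)
    (t : ℝ) (ht : t ∈ Set.Ioo (0:ℝ) l) :
    (1 / Real.Gamma (α + 1)) *
        ∫ x in Set.Ioo (0:ℝ) t, (F x / F t) * (-Real.log (F x / F t)) ^ α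
      ≤ t / Real.Gamma (α + 1) * (α / Real.exp 1) ^ α := by
  have hFeq : F = fun x => (ℙ : Measure Ω).real {ω | X ω ≤ x} := funext hF
  have hbound : ∀ x ∈ Ioo 0 t,
      ‖F x / F t * (-Real.log (F x / F t)) ^ α‖ ≤ (α / Real.exp 1) ^ α := by
    intro x hx
    have hratio := div_mem_Icc_of_monotone (hFeq ▸ monotone_measureReal_le ℙ X)
      (fun y => hFeq ▸ measureReal_nonneg) hx.2.le
    obtain ⟨hnonneg, hle⟩ := Real.mul_neg_log_rpow_mem_Icc hα hratio
    rwa [Real.norm_of_nonneg hnonneg]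
  have hint := (le_abs_self _).trans
    (norm_setIntegral_le_of_norm_le_const (measure_Ioo_lt_top (μ := volume)) hbound)
  rw [Real.volume_real_Ioo_of_le ht.1.le, sub_zero] at hint
  have hΓ : 0 < Real.Gamma (α + 1) := Real.Gamma_pos_of_pos (by linarith)
  rw [one_div_mul_eq_div, div_mul_eq_mul_div, mul_comm t]
  exact div_le_div_of_nonneg_right hint hΓ.le

/-- for a random variable `X` with support `(0,l)`, CDF `F`, and finite
dynamic fractional generalized cumulative entropy `CE_α(X;t)`, for every `0 < α ≤ 1`
and every `t ∈ (0,l)`: `CE_α(X;t) ≤ (t/Γ(α+1)) (α/e)^α`. -/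
theorem dfgce_upper_bound
    {Ω : Type*} [MeasureSpace Ω] [IsProbabilityMeasure (ℙ : Measure Ω)]
    (X : Ω → ℝ) (hX : Measurable X)
    (l : ℝ) (hl : 0 < l)
    (hsupp : ∀ᵐ ω ∂ℙ, X ω ∈ Set.Ioo 0 l)
    (F : ℝ → ℝ) (hF : ∀ x, F x = (ℙ {ω | X ω ≤ x}).toReal)
    (α : ℝ) (hα : 0 < α) (hα1 : α ≤ 1)
    (t : ℝ) (ht : t ∈ Set.Ioo (0:ℝ) l)
    (hfin : IntegrableOn
      (fun x => (F x / F t) * (-Real.log (F x / F t)) ^ α) (Set.Ioo (0:ℝ) t)) :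
    (1 / Real.Gamma (α + 1)) *
        ∫ x in Set.Ioo (0:ℝ) t, (F x / F t) * (-Real.log (F x / F t)) ^ α
      ≤ t / Real.Gamma (α + 1) * (α / Real.exp 1) ^ α :=
  dfgce_upper_bound_general X l F hF α hα t ht
end
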